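/- arXiv:2307.16756 — 2 statements merged into one kernel-verified Lean document; each statement's English description precedes it below -/
import Mathlib

section
/- Let c ≠ t in Fin n, S : Finset (Fin n), and α ∈ ℝ. Then CNOT_{c,t} · exp(−j·α·Z_S) · CNOT_{c,t} = exp(−j·α·Z_{S'}), where S' = S Δ {c} if t ∈ S and S' = S otherwise (Δ is symmetric difference). -/
/-!
`CNOT c t` is the permutation matrix of the involution `cnotFun c t`, so conjugation by it
commutes with `exp` and turns `diagonal d` into `diagonal (d ∘ cnotFun c t)`. The diagonal entry
of `Z_S` at `x` is `∏ i ∈ S, (-1) ^ x i`; replacing `x t` by `x t xor x c` multiplies it by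
`(-1) ^ x c` when `t ∈ S`, which is exactly the effect of toggling `c` in `S`.
-/

open Matrix

noncomputable section

/-- The Pauli-Z monomial `Z_S`: the `2^n × 2^n` diagonal matrix (rows and columns indexed
by bitstrings `x : Fin n → Bool`) whose diagonal entry at `x` is
`(-1) ^ |{i ∈ S : x i = true}|`. -/
def PauliZ {n : ℕ} (S : Finset (Fin n)) : Matrix (Fin n → Bool) (Fin n → Bool) ℂ :=
  Matrix.diagonal fun x => (-1 : ℂ) ^ (S.filter fun i => x i = true).card

/-- The action of `CNOT c t` on bitstrings: flip bit `t` when bit `c` is set. -/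
def cnotFun {n : ℕ} (c t : Fin n) (x : Fin n → Bool) : Fin n → Bool :=
  Function.update x t (xor (x t) (x c))

/-- The CNOT gate with control `c` and target `t`: the permutation matrix sending the
standard basis vector `e_x` to `e_(cnotFun c t x)`. -/
def CNOT {n : ℕ} (c t : Fin n) : Matrix (Fin n → Bool) (Fin n → Bool) ℂ :=
  Matrix.of fun y x => if y = cnotFun c t x then 1 else 0

open Finset

theorem Finset.prod_symmDiff_singleton {ι M : Type*} [CommMonoid M] [DecidableEq ι]
    (S : Finset ι) (f : ι → M) {c : ι} (hc : f c * f c = 1) :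
    ∏ i ∈ symmDiff S {c}, f i = (∏ i ∈ S, f i) * f c := by
  by_cases h : c ∈ S
  · rw [symmDiff_of_ge (singleton_subset_iff.2 h), ← prod_erase_mul S f h, sdiff_singleton_eq_erase,
      mul_assoc, hc, mul_one]
  · rw [(disjoint_singleton_right.2 h).symmDiff_eq_sup, sup_eq_union,
      prod_union (disjoint_singleton_right.2 h), prod_singleton]

section BitSign

variable {R : Type*} [CommRing R]

variable (R) in
def bitSign (b : Bool) : R := if b then -1 else 1

theorem bitSign_xor (a b : Bool) : bitSign R (xor a b) = bitSign R a * bitSign R b := by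
  cases a <;> cases b <;> simp [bitSign]

theorem bitSign_mul_self (b : Bool) : bitSign R b * bitSign R b = 1 := by
  cases b <;> simp [bitSign]

theorem neg_one_pow_card_filter_eq_prod_bitSign {ι : Type*} (S : Finset ι) (x : ι → Bool) :
    (-1 : R) ^ #(S.filter fun i => x i = true) = ∏ i ∈ S, bitSign R (x i) := by
  simp only [bitSign, prod_ite, prod_const, one_pow, mul_one]

theorem prod_bitSign_update_xor {ι : Type*} [DecidableEq ι] {S : Finset ι} {t : ι} (ht : t ∈ S)
    (x : ι → Bool) (b : Bool) :
    ∏ i ∈ S, bitSign R (Function.update x t (xor (x t) b) i) =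
      (∏ i ∈ S, bitSign R (x i)) * bitSign R b := by
  simp only [Function.apply_update (fun _ => bitSign R)]
  rw [prod_update_of_mem ht, bitSign_xor, sdiff_singleton_eq_erase, ← prod_erase_mul S _ ht]
  ring

end BitSign

theorem neg_one_pow_card_filter_cnotFun {R : Type*} [CommRing R] {n : ℕ} (c t : Fin n)
    (S : Finset (Fin n)) (x : Fin n → Bool) :
    (-1 : R) ^ #(S.filter fun i => cnotFun c t x i = true) =
      (-1) ^ #((if t ∈ S then symmDiff S {c} else S).filter fun i => x i = true) := by
  simp only [neg_one_pow_card_filter_eq_prod_bitSign]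
  split_ifs with ht
  · rw [prod_symmDiff_singleton _ _ (bitSign_mul_self _)]
    exact prod_bitSign_update_xor ht x (x c)
  · simp only [cnotFun, Function.apply_update (fun _ => bitSign R), prod_update_of_notMem ht]

theorem Matrix.permMatrix_mul_diagonal_mul_permMatrix_inv {m R : Type*} [Fintype m]
    [DecidableEq m] [Semiring R] (σ : Equiv.Perm m) (d : m → R) :
    σ.permMatrix R * diagonal d * σ⁻¹.permMatrix R = diagonal (d ∘ σ) := by
  rw [PEquiv.toMatrix_toPEquiv_mul, PEquiv.mul_toMatrix_toPEquiv, submatrix_submatrix]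
  exact submatrix_diagonal_equiv d σ

section CNOT

variable {n : ℕ} {c t : Fin n}

theorem cnotFun_involutive (hct : c ≠ t) : Function.Involutive (cnotFun c t) := by
  intro x
  funext i
  rcases eq_or_ne i t with rfl | hit
  · simp [cnotFun, hct]
  · simp [cnotFun, hit]

def cnotPerm (hct : c ≠ t) : Equiv.Perm (Fin n → Bool) :=
  (cnotFun_involutive hct).toPerm

theorem cnotPerm_inv (hct : c ≠ t) : (cnotPerm hct)⁻¹ = cnotPerm hct :=
  Function.Involutive.toPerm_symm _

theorem CNOT_eq_permMatrix (hct : c ≠ t) : CNOT c t = (cnotPerm hct).permMatrix ℂ := by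
  ext y x
  simp [CNOT, cnotPerm, PEquiv.toMatrix_apply, (cnotFun_involutive hct).eq_iff]

theorem CNOT_mul_CNOT (hct : c ≠ t) : CNOT c t * CNOT c t = 1 := by
  have hσσ : cnotPerm hct * cnotPerm hct = 1 := Equiv.ext (cnotFun_involutive hct)
  rw [CNOT_eq_permMatrix hct, ← permMatrix_mul, hσσ, permMatrix_one]

theorem CNOT_mul_diagonal_mul_CNOT (hct : c ≠ t) (d : (Fin n → Bool) → ℂ) :
    CNOT c t * diagonal d * CNOT c t = diagonal (d ∘ cnotFun c t) := by
  conv_lhs => rw [CNOT_eq_permMatrix hct]; arg 2; rw [← cnotPerm_inv hct]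
  exact permMatrix_mul_diagonal_mul_permMatrix_inv _ d

theorem CNOT_mul_PauliZ_mul_CNOT (hct : c ≠ t) (S : Finset (Fin n)) :
    CNOT c t * PauliZ S * CNOT c t = PauliZ (if t ∈ S then symmDiff S {c} else S) := by
  rw [PauliZ, CNOT_mul_diagonal_mul_CNOT hct, PauliZ]
  exact congrArg diagonal (funext (neg_one_pow_card_filter_cnotFun c t S))

end CNOT

/-- For `c ≠ t` and `α ∈ ℝ`, conjugating the phase-rotation operator
`exp (-j·α·Z_S)` by `CNOT c t` yields `exp (-j·α·Z_(S'))`, where `S' = S Δ {c}` if `t ∈ S`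
and `S' = S` otherwise. -/
theorem cnot_conj_rotation {n : ℕ} (c t : Fin n) (hct : c ≠ t) (S : Finset (Fin n))
    (α : ℝ) :
    CNOT c t * NormedSpace.exp ((-Complex.I * (α : ℂ)) • PauliZ S) * CNOT c t =
      NormedSpace.exp ((-Complex.I * (α : ℂ)) •
        PauliZ (if t ∈ S then symmDiff S {c} else S)) := by
  have hCC := CNOT_mul_CNOT hct
  have hinv : (CNOT c t)⁻¹ = CNOT c t := inv_eq_left_inv hCC
  rw [← CNOT_mul_PauliZ_mul_CNOT hct, ← Matrix.smul_mul, ← Matrix.mul_smul]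
  simpa only [hinv] using (exp_conj _ _ (IsUnit.of_mul_eq_one_right _ hCC)).symm
end
end

section
/- Let S : Finset (Fin n), let a ∈ Fin n with a ∉ S, let i_1, …, i_k be an enumeration of S, let α ∈ ℝ, and set V := CNOT_{i_1,a} · CNOT_{i_2,a} ⋯ CNOT_{i_k,a}. Then (1) V · exp(−j·α·Z_{{a}}) · V = exp(−j·α·Z_{S ∪ {a}}), and (2) for every bitstring x : Fin n → Bool with x a = false, V · exp(−j·α·Z_{{a}}) · V · e_x = exp(−j·α·(−1)^{|{i ∈ S : x i = true}|}) · e_x, i.e. on states where the ancilla qubit a is |0⟩ the circuit acts as exp(−j·α·Z_S). -/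
open Matrix

noncomputable section

/-- The standard (computational) basis vector `e_x`. -/
def stdVec {n : ℕ} (x : Fin n → Bool) : (Fin n → Bool) → ℂ :=
  fun y => if y = x then 1 else 0

/-! The CNOT cascade is the permutation matrix of the involution that XORs the parity of `x`
on `S` into bit `a`. Conjugating a diagonal matrix by the permutation matrix of an involution
`f` precomposes its diagonal with `f`, and the `Z_a`-sign of the routed bitstring is
`(-1)^(x a)` times the parity sign of `x` on `S`, which is its `Z_(S ∪ {a})`-sign. Matrix
exponentials of diagonal matrices are taken entrywise, and when `x a = false` the extra factor
is `1`. -/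

section FunMatrix

variable {ι R : Type*} [DecidableEq ι] [Semiring R]

def funMatrix (f : ι → ι) : Matrix ι ι R :=
  Matrix.of fun y x => if y = f x then 1 else 0

theorem funMatrix_id : (funMatrix id : Matrix ι ι R) = 1 := by
  ext y x
  simp [funMatrix, one_apply]

variable [Fintype ι]

theorem funMatrix_mul_funMatrix (f g : ι → ι) :
    (funMatrix f * funMatrix g : Matrix ι ι R) = funMatrix (f ∘ g) := by
  ext y x
  simp [funMatrix, mul_apply]

theorem funMatrix_mul_diagonal {f : ι → ι} (hf : Function.Involutive f) (d : ι → R) :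
    funMatrix f * diagonal d = diagonal (d ∘ f) * funMatrix f := by
  ext y x
  by_cases h : y = f x
  · simp [funMatrix, h, hf x]
  · simp [funMatrix, h]

theorem funMatrix_mul_diagonal_mul_funMatrix {f : ι → ι} (hf : Function.Involutive f)
    (d : ι → R) : funMatrix f * diagonal d * funMatrix f = diagonal (d ∘ f) := by
  rw [funMatrix_mul_diagonal hf, Matrix.mul_assoc, funMatrix_mul_funMatrix, hf.comp_self,
    funMatrix_id, Matrix.mul_one]

end FunMatrix

section Circuit

variable {n : ℕ}

theorem CNOT_eq_funMatrix (c t : Fin n) : CNOT c t = funMatrix (cnotFun c t) := rfl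

def parity (l : List (Fin n)) (x : Fin n → Bool) : Bool :=
  l.foldr (fun i b => xor (x i) b) false

theorem parity_nil (x : Fin n → Bool) : parity [] x = false := rfl

theorem parity_cons (c : Fin n) (l : List (Fin n)) (x : Fin n → Bool) :
    parity (c :: l) x = xor (x c) (parity l x) := rfl

theorem parity_congr (l : List (Fin n)) {x y : Fin n → Bool} (h : ∀ i ∈ l, x i = y i) :
    parity l x = parity l y := by
  induction l with
  | nil => rfl
  | cons c l ih =>
    rw [List.forall_mem_cons] at h
    rw [parity_cons, parity_cons, h.1, ih h.2]

def xorParity (a : Fin n) (l : List (Fin n)) (x : Fin n → Bool) : Fin n → Bool :=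
  Function.update x a (xor (x a) (parity l x))

theorem xorParity_apply_self (a : Fin n) (l : List (Fin n)) (x : Fin n → Bool) :
    xorParity a l x a = xor (x a) (parity l x) := Function.update_self a _ x

theorem xorParity_apply_of_ne {a i : Fin n} (h : i ≠ a) (l : List (Fin n)) (x : Fin n → Bool) :
    xorParity a l x i = x i := Function.update_of_ne h _ x

theorem xorParity_involutive {a : Fin n} {l : List (Fin n)} (ha : a ∉ l) :
    Function.Involutive (xorParity a l) := by
  intro x
  have hparity : parity l (xorParity a l x) = parity l x :=
    parity_congr l fun i hi => xorParity_apply_of_ne (ne_of_mem_of_not_mem hi ha) l x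
  funext i
  by_cases h : i = a
  · subst h
    rw [xorParity_apply_self, hparity, xorParity_apply_self, Bool.xor_assoc, Bool.xor_self,
      Bool.xor_false]
  · rw [xorParity_apply_of_ne h, xorParity_apply_of_ne h]

theorem cnotFun_xorParity {a c : Fin n} (hc : c ≠ a) (l : List (Fin n)) (x : Fin n → Bool) :
    cnotFun c a (xorParity a l x) = xorParity a (c :: l) x := by
  rw [cnotFun, xorParity_apply_self, xorParity_apply_of_ne hc, xorParity, Function.update_idem,
    xorParity, parity_cons, Bool.xor_assoc, Bool.xor_comm (x c)]

theorem prod_CNOT_eq_funMatrix {a : Fin n} {l : List (Fin n)} (ha : a ∉ l) :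
    (l.map fun i => CNOT i a).prod = funMatrix (xorParity a l) := by
  induction l with
  | nil =>
    rw [List.map_nil, List.prod_nil, ← funMatrix_id]
    congr 1
    funext x
    simp [xorParity, parity_nil]
  | cons c l ih =>
    rw [List.mem_cons, not_or] at ha
    rw [List.map_cons, List.prod_cons, ih ha.2, CNOT_eq_funMatrix, funMatrix_mul_funMatrix]
    congr 1
    funext x
    exact cnotFun_xorParity (Ne.symm ha.1) l x

def boolSign (b : Bool) : ℂ := if b then -1 else 1

theorem boolSign_xor (b c : Bool) : boolSign (xor b c) = boolSign b * boolSign c := by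
  cases b <;> cases c <;> simp [boolSign]

def zSign (S : Finset (Fin n)) (x : Fin n → Bool) : ℂ :=
  (-1 : ℂ) ^ (S.filter fun i => x i = true).card

theorem PauliZ_eq_diagonal_zSign (S : Finset (Fin n)) : PauliZ S = diagonal (zSign S) := rfl

theorem zSign_empty (x : Fin n → Bool) : zSign ∅ x = 1 := by
  simp [zSign]

theorem zSign_insert {a : Fin n} {S : Finset (Fin n)} (ha : a ∉ S) (x : Fin n → Bool) :
    zSign (insert a S) x = boolSign (x a) * zSign S x := by
  unfold zSign
  rw [Finset.filter_insert]
  cases h : x a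
  · simp [boolSign]
  · rw [if_pos rfl, Finset.card_insert_of_notMem fun hmem => ha (Finset.mem_of_mem_filter _ hmem),
      pow_succ, boolSign, if_pos rfl, mul_comm]

theorem zSign_singleton (a : Fin n) (x : Fin n → Bool) : zSign {a} x = boolSign (x a) := by
  rw [← insert_empty_eq, zSign_insert (Finset.notMem_empty a), zSign_empty, mul_one]

theorem zSign_toFinset {l : List (Fin n)} (hl : l.Nodup) (x : Fin n → Bool) :
    zSign l.toFinset x = boolSign (parity l x) := by
  induction l with
  | nil => rw [List.toFinset_nil, zSign_empty, parity_nil, boolSign, if_neg Bool.false_ne_true]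
  | cons c l ih =>
    rw [List.nodup_cons] at hl
    rw [List.toFinset_cons, zSign_insert (by simpa using hl.1), ih hl.2, parity_cons,
      boolSign_xor]

theorem zSign_singleton_xorParity {a : Fin n} {l : List (Fin n)} (ha : a ∉ l) (hl : l.Nodup)
    (x : Fin n → Bool) :
    zSign {a} (xorParity a l x) = zSign (insert a l.toFinset) x := by
  rw [zSign_singleton, zSign_insert (by simpa using ha), zSign_toFinset hl,
    xorParity_apply_self, boolSign_xor]

theorem exp_smul_PauliZ (c : ℂ) (S : Finset (Fin n)) :
    NormedSpace.exp (c • PauliZ S) = diagonal fun x => Complex.exp (c * zSign S x) := by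
  rw [PauliZ_eq_diagonal_zSign, ← diagonal_smul, exp_diagonal]
  congr 1
  funext x
  rw [Pi.coe_exp, Pi.smul_apply, smul_eq_mul, Complex.exp_eq_exp_ℂ]

theorem diagonal_mulVec_stdVec (d : (Fin n → Bool) → ℂ) (x : Fin n → Bool) :
    diagonal d *ᵥ stdVec x = d x • stdVec x := by
  funext y
  by_cases h : y = x <;> simp [stdVec, mulVec_diagonal, h]

end Circuit

/-- Ancilla-based circuit: with `a ∉ S`, `l` an enumeration of `S`, and
`V = CNOT_{i₁,a} ⋯ CNOT_{i_k,a}`, one has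
(1) `V · exp(-j·α·Z_{{a}}) · V = exp(-j·α·Z_(S ∪ {a}))`, and
(2) on every basis state with the ancilla `a` in `|0⟩`, the circuit acts as
`exp(-j·α·Z_S)`, i.e. it multiplies `e_x` by `exp(-j·α·(-1)^{|{i ∈ S : x i = true}|})`. -/
theorem ancilla_circuit {n : ℕ} (S : Finset (Fin n)) (a : Fin n) (ha : a ∉ S)
    (l : List (Fin n)) (hl : l.Nodup) (hlS : l.toFinset = S) (α : ℝ)
    (V : Matrix (Fin n → Bool) (Fin n → Bool) ℂ)
    (hV : V = (l.map fun i => CNOT i a).prod) :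
    V * NormedSpace.exp ((-Complex.I * (α : ℂ)) • PauliZ {a}) * V =
      NormedSpace.exp ((-Complex.I * (α : ℂ)) • PauliZ (insert a S)) ∧
    ∀ x : Fin n → Bool, x a = false →
      (V * NormedSpace.exp ((-Complex.I * (α : ℂ)) • PauliZ {a}) * V).mulVec (stdVec x) =
        Complex.exp (-Complex.I * (α : ℂ) *
            (-1 : ℂ) ^ (S.filter fun i => x i = true).card) • stdVec x := by
  have hal : a ∉ l := fun h => ha (hlS ▸ List.mem_toFinset.mpr h)
  have hcircuit : V * NormedSpace.exp ((-Complex.I * (α : ℂ)) • PauliZ {a}) * V =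
      NormedSpace.exp ((-Complex.I * (α : ℂ)) • PauliZ (insert a S)) := by
    rw [hV, prod_CNOT_eq_funMatrix hal, exp_smul_PauliZ, exp_smul_PauliZ,
      funMatrix_mul_diagonal_mul_funMatrix (xorParity_involutive hal)]
    congr 1
    funext x
    rw [Function.comp_apply, zSign_singleton_xorParity hal hl, hlS]
  refine ⟨hcircuit, fun x hx => ?_⟩
  rw [hcircuit, exp_smul_PauliZ, diagonal_mulVec_stdVec, zSign_insert ha, hx, boolSign,
    if_neg Bool.false_ne_true, one_mul, zSign]
end
end
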